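/- Let θ be a non-constant inner function, v ∈ H² a unit vector with S*v ≠ 0, u ∈ H² a unit vector, and R₁ = H_{θ̄} + ⟨·, u⟩ v. If h ∈ Ker R₁ with ⟨h, u⟩ ≠ 0, then θ · Jv ∈ H², and in fact θ · Jv ∈ K_{zθ} = H² ⊖ zθH². -/

import Mathlib

noncomputable section

open MeasureTheory Complex
open scoped ENNReal ComplexConjugate

namespace Hardy

instance fact_one_pos : Fact ((0:ℝ) < 1) := ⟨one_pos⟩
instance fact_one_le_top : Fact ((1:ℝ≥0∞) ≤ ∞) := ⟨le_top⟩

/-- The unit circle, modelled additively as `ℝ/ℤ`. -/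
abbrev Circ := AddCircle (1 : ℝ)
/-- Normalized Haar (arc-length) measure on the circle. -/
abbrev μT : Measure Circ := AddCircle.haarAddCircle
/-- The Lebesgue space `L²(𝕋)`. -/
abbrev L2 : Type := Lp ℂ 2 μT
/-- The space `L^∞(𝕋)`. -/
abbrev Linf : Type := Lp ℂ ⊤ μT

/-- Multiplication of an `L²` function by an `L^∞` function. -/
def mul (φ : Linf) (f : L2) : L2 :=
  MemLp.toLp ((φ : Circ → ℂ) • (f : Circ → ℂ))
    ((Lp.memLp f).smul (Lp.memLp φ))

/-- Multiplication in `L^∞`. -/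
def mulInf (φ ψ : Linf) : Linf :=
  MemLp.toLp ((φ : Circ → ℂ) • (ψ : Circ → ℂ))
    ((Lp.memLp ψ).smul (Lp.memLp φ))

/-- Complex conjugation on `L^∞`. -/
def conjInf (φ : Linf) : Linf :=
  MemLp.toLp (fun x => conj ((φ : Circ → ℂ) x))
    (Complex.isometry_conj.lipschitz.comp_memLp (map_zero _) (Lp.memLp φ))

/-- Negation on the circle preserves Haar measure. -/
lemma negMP : MeasurePreserving (fun x : Circ => -x) μT μT :=
  Measure.measurePreserving_neg μT

/-- The flip operator `J` on `L²`: `(Jf)(ξ) = f(ξ̄)`, i.e. `x ↦ f(-x)`. -/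
def J (f : L2) : L2 := Lp.compMeasurePreserving (fun x : Circ => -x) negMP f

/-- The flip operator on `L^∞`. -/
def Jinf (φ : Linf) : Linf := Lp.compMeasurePreserving (fun x : Circ => -x) negMP φ

/-- The Hardy space `H²`, the closed span of the nonnegative Fourier modes in `L²`. -/
def H2 : Submodule ℂ L2 :=
  (Submodule.span ℂ (Set.range fun n : ℕ => (fourierLp 2 (n : ℤ) : L2))).topologicalClosure

instance : CompleteSpace H2 :=
  (Submodule.isClosed_topologicalClosure _).completeSpace_coe

/-- The Riesz (orthogonal) projection `P : L² → H²` (viewed as a map into `L²`). -/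
def P (f : L2) : L2 := (H2.orthogonalProjectionOnto f : L2)

/-- The `n`-th Fourier coefficient of `f ∈ L²`.  For `f ∈ H²`, `coeff f 0 = f(0)`,
the value at the origin of the holomorphic extension. -/
def coeff (f : L2) (n : ℤ) : ℂ := inner ℂ ((fourierLp 2 n : L2)) f

/-- The `H²` inner product (inherited from `L²`), conjugate-linear in the first slot. -/
def ip (f g : L2) : ℂ := inner ℂ f g

/-- The symbol `z` as an element of `L^∞`. -/
def zsym : Linf := fourierLp ⊤ 1
/-- The symbol `z̄` as an element of `L^∞`. -/
def zbar : Linf := fourierLp ⊤ (-1)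

/-- The unilateral (forward) shift `S` on `L²` (restricting to `H²`): `f ↦ z f`. -/
def shift (f : L2) : L2 := mul zsym f
/-- The backward shift `S* = T_{z̄}` on `H²`: `f ↦ P(z̄ f)`. -/
def bshift (f : L2) : L2 := P (mul zbar f)

/-- The Toeplitz operator `T_φ f = P(φ f)`. -/
def toep (φ : Linf) (f : L2) : L2 := P (mul φ f)
/-- The Hankel operator `H_φ f = P J(φ f)`. -/
def hank (φ : Linf) (f : L2) : L2 := P (J (mul φ f))

/-- The constant function `1` in `L²`. -/
def one2 : L2 := fourierLp 2 0
/-- The canonical image of an `L^∞` function in `L²`. -/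
def toL2 (φ : Linf) : L2 := mul φ one2

/-- `φ ∈ L^∞` belongs to `H^∞`, i.e. multiplication by `φ` preserves `H²`. -/
def IsHinf (φ : Linf) : Prop := ∀ f ∈ H2, mul φ f ∈ H2

/-- `θ` is an inner function: `θ ∈ H^∞` and `|θ| = 1` a.e. on the circle. -/
def IsInner (θ : Linf) : Prop :=
  IsHinf θ ∧ ∀ᵐ x ∂μT, ‖(θ : Circ → ℂ) x‖ = 1

/-- `θ` is non-constant (as an a.e.-defined function). -/
def NonConst (θ : Linf) : Prop := ¬ ∃ c : ℂ, (θ : Circ → ℂ) =ᵐ[μT] fun _ => c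

/-- The shift-invariant subspace `θH² = {θ g : g ∈ H²}`. -/
def thetaH2 (θ : Linf) : Set L2 := {g | ∃ f ∈ H2, g = mul θ f}

end Hardy

namespace Hardy

/-- The kernel of the `n`-rank perturbed Hankel operator
`R_n h = H_φ h + ∑ ⟨h, uᵢ⟩ vᵢ`, as a subset of `H²`. -/
def kerR (φ : Linf) {n : ℕ} (u v : Fin n → L2) : Set L2 :=
  {h | h ∈ H2 ∧ hank φ h + ∑ i, ip (u i) h • v i = 0}

end Hardy

open Hardy

namespace Hardy

local notation "⟪" x ", " y "⟫" => @inner ℂ L2 _ x y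

lemma mul_ae (φ : Linf) (f : L2) :
    ⇑(mul φ f) =ᵐ[μT] fun x => (φ : Circ → ℂ) x * (f : Circ → ℂ) x :=
  MemLp.coeFn_toLp _

lemma conjInf_ae (φ : Linf) :
    ⇑(conjInf φ) =ᵐ[μT] fun x => conj ((φ : Circ → ℂ) x) :=
  MemLp.coeFn_toLp _

lemma J_ae (f : L2) : ⇑(J f) =ᵐ[μT] fun x => f (-x) :=
  Lp.coeFn_compMeasurePreserving f negMP

lemma ae_comp_neg {g g' : Circ → ℂ} (h : g =ᵐ[μT] g') :
    (fun x : Circ => g (-x)) =ᵐ[μT] fun x => g' (-x) :=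
  negMP.quasiMeasurePreserving.ae_eq_comp h

lemma J_add (f g : L2) : J (f + g) = J f + J g :=
  map_add (Lp.compMeasurePreserving (fun x : Circ => -x) negMP) f g

lemma J_smul (c : ℂ) (f : L2) : J (c • f) = c • J f :=
  map_smul (Lp.compMeasurePreservingₗ ℂ (fun x : Circ => -x) negMP) c f

lemma J_inner (f g : L2) : ⟪J f, J g⟫ = ⟪f, g⟫ :=
  (Lp.compMeasurePreservingₗᵢ ℂ (fun x : Circ => -x) negMP).inner_map_map f g

lemma J_J (f : L2) : J (J f) = f := by
  apply Lp.ext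
  refine (J_ae (J f)).trans ?_
  refine (ae_comp_neg (J_ae f)).trans ?_
  filter_upwards with x
  simp

lemma fourier_neg_arg (n : ℤ) (x : Circ) : fourier n (-x) = fourier (-n) x := by
  rw [fourier_apply, fourier_apply, smul_neg, ← neg_smul]

lemma J_fourier (n : ℤ) : J (fourierLp 2 n : L2) = (fourierLp 2 (-n) : L2) := by
  apply Lp.ext
  refine (J_ae _).trans ?_
  refine (ae_comp_neg (coeFn_fourierLp 2 n)).trans ?_
  refine Filter.EventuallyEq.trans ?_ (coeFn_fourierLp 2 (-n)).symm
  filter_upwards with x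
  exact fourier_neg_arg n x

end Hardy

namespace Hardy

local notation "⟪" x ", " y "⟫" => @inner ℂ L2 _ x y

lemma fourier_mem_H2 {n : ℤ} (hn : 0 ≤ n) : (fourierLp 2 n : L2) ∈ H2 := by
  apply Submodule.le_topologicalClosure
  apply Submodule.subset_span
  exact ⟨n.toNat, by simp [Int.toNat_of_nonneg hn]⟩

lemma one2_mem_H2 : one2 ∈ H2 := fourier_mem_H2 le_rfl

lemma inner_H2_eq_zero {g : L2}
    (hg : ∀ n : ℕ, ⟪g, (fourierLp 2 (n : ℤ) : L2)⟫ = 0) :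
    ∀ w ∈ H2, ⟪g, w⟫ = 0 := by
  intro w hw
  have hle : H2 ≤ LinearMap.ker ((innerSL ℂ g : L2 →L[ℂ] ℂ) : L2 →ₗ[ℂ] ℂ) := by
    apply Submodule.topologicalClosure_minimal
    · rw [Submodule.span_le]
      rintro _ ⟨m, rfl⟩
      simpa using hg m
    · exact ContinuousLinearMap.isClosed_ker _
  simpa using hle hw

lemma coeff_eq_zero_of_mem_H2 {f : L2} (hf : f ∈ H2) {n : ℤ} (hn : n < 0) :
    ⟪(fourierLp 2 n : L2), f⟫ = 0 := by
  have hg : ∀ m : ℕ, ⟪(fourierLp 2 n : L2), (fourierLp 2 (m : ℤ) : L2)⟫ = 0 := by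
    intro m
    exact orthonormal_fourier.2 (by omega)
  exact inner_H2_eq_zero hg f hf

lemma mem_H2_of_coeff {f : L2}
    (h : ∀ n : ℤ, n < 0 → ⟪(fourierLp 2 n : L2), f⟫ = 0) : f ∈ H2 := by
  have hs := (fourierBasis (T := 1)).hasSum_repr f
  rw [coe_fourierBasis] at hs
  have hcl : IsClosed (H2 : Set L2) := Submodule.isClosed_topologicalClosure _
  refine hcl.mem_of_tendsto hs ?_
  filter_upwards with s
  refine Submodule.sum_mem _ (fun i _ => ?_)
  rcases lt_or_ge i 0 with hi | hi
  · have : (fourierBasis (T := 1)).repr f i = 0 := by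
      rw [fourierBasis.repr_apply_apply]
      rw [coe_fourierBasis]
      exact h i hi
    rw [this, zero_smul]
    exact Submodule.zero_mem _
  · exact Submodule.smul_mem _ _ (fourier_mem_H2 hi)

lemma P_mem (f : L2) : P f ∈ H2 := (H2.orthogonalProjectionOnto f).2

lemma P_of_mem {f : L2} (hf : f ∈ H2) : P f = f := by
  unfold P
  exact (Submodule.starProjection_eq_self_iff (K := H2)).mpr hf

lemma fourier_mem_H2_orth {n : ℤ} (hn : n < 0) :
    (fourierLp 2 n : L2) ∈ H2ᗮ := by
  rw [Submodule.mem_orthogonal]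
  intro w hw
  have hz := inner_H2_eq_zero
    (g := (fourierLp 2 n : L2))
    (fun m => orthonormal_fourier.2 (by omega)) w hw
  rw [← inner_conj_symm, hz, map_zero]

lemma P_fourier_neg {n : ℤ} (hn : n < 0) : P (fourierLp 2 n : L2) = 0 := by
  unfold P
  rw [Submodule.orthogonalProjectionOnto_apply_of_mem_orthogonal (fourier_mem_H2_orth hn)]
  simp

end Hardy

namespace Hardy

local notation "⟪" x ", " y "⟫" => @inner ℂ L2 _ x y

/-- `J` as a continuous linear map. -/
def JL : L2 →L[ℂ] L2 :=
  (Lp.compMeasurePreservingₗᵢ ℂ (fun x : Circ => -x) negMP).toContinuousLinearMap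

/-- `P` as a continuous linear map. -/
def PL : L2 →L[ℂ] L2 := H2.subtypeL.comp H2.orthogonalProjectionOnto

lemma JL_apply (f : L2) : JL f = J f := rfl
lemma PL_apply (f : L2) : PL f = P f := rfl

lemma J_zero : J (0 : L2) = 0 :=
  map_zero (Lp.compMeasurePreserving (fun x : Circ => -x) negMP)

lemma fourier_inner_fourier (i j : ℤ) :
    ⟪(fourierLp 2 i : L2), (fourierLp 2 j : L2)⟫ = if i = j then 1 else 0 :=
  orthonormal_iff_ite.mp orthonormal_fourier i j

lemma JPJ (g : L2) :
    J (P (J g)) = g - P g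
      + ⟪(fourierLp 2 (0:ℤ) : L2), g⟫ • (fourierLp 2 (0:ℤ) : L2) := by
  have key : JL.comp (PL.comp JL)
      = (ContinuousLinearMap.id ℂ L2) - PL
        + (innerSL ℂ ((fourierLp 2 (0:ℤ) : L2))).smulRight (fourierLp 2 (0:ℤ) : L2) := by
    have hd : Dense ((Submodule.span ℂ (Set.range (fourierLp 2 : ℤ → L2))) : Set L2) :=
      Submodule.dense_iff_topologicalClosure_eq_top.mpr
        (span_fourierLp_closure_eq_top (by norm_num))
    refine ContinuousLinearMap.ext_on hd ?_
    rintro _ ⟨n, rfl⟩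
    simp only [ContinuousLinearMap.comp_apply, ContinuousLinearMap.add_apply,
      ContinuousLinearMap.sub_apply, ContinuousLinearMap.id_apply,
      ContinuousLinearMap.smulRight_apply, innerSL_apply_apply, JL_apply, PL_apply]
    rcases lt_trichotomy n 0 with hn | hn | hn
    · rw [J_fourier, P_of_mem (fourier_mem_H2 (by omega)), J_fourier, neg_neg,
        P_fourier_neg hn, fourier_inner_fourier, if_neg (by omega)]
      simp
    · subst hn
      rw [J_fourier, neg_zero, P_of_mem (fourier_mem_H2 le_rfl), J_fourier, neg_zero,
        fourier_inner_fourier, if_pos rfl]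
      simp
    · rw [J_fourier, P_fourier_neg (by omega), J_zero,
        P_of_mem (fourier_mem_H2 (by omega)), fourier_inner_fourier, if_neg (by omega)]
      simp
  have := congrFun (congrArg (fun (T : L2 →L[ℂ] L2) => (T : L2 → L2)) key) g
  simpa only [ContinuousLinearMap.comp_apply, ContinuousLinearMap.add_apply,
    ContinuousLinearMap.sub_apply, ContinuousLinearMap.id_apply,
    ContinuousLinearMap.smulRight_apply, innerSL_apply_apply, JL_apply, PL_apply] using this

lemma mul_add' (φ : Linf) (f g : L2) : mul φ (f + g) = mul φ f + mul φ g := by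
  apply Lp.ext
  filter_upwards [mul_ae φ (f + g), mul_ae φ f, mul_ae φ g, Lp.coeFn_add f g,
    Lp.coeFn_add (mul φ f) (mul φ g)] with x h1 h2 h3 h4 h5
  rw [h1, h5, Pi.add_apply, h2, h3, h4, Pi.add_apply, mul_add]

lemma mul_smul' (φ : Linf) (c : ℂ) (f : L2) : mul φ (c • f) = c • mul φ f := by
  apply Lp.ext
  filter_upwards [mul_ae φ (c • f), mul_ae φ f, Lp.coeFn_smul c f,
    Lp.coeFn_smul c (mul φ f)] with x h1 h2 h3 h4
  rw [h1, h4, Pi.smul_apply, h2, h3, Pi.smul_apply, smul_eq_mul, smul_eq_mul]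
  ring

lemma mul_sub' (φ : Linf) (f g : L2) : mul φ (f - g) = mul φ f - mul φ g := by
  apply Lp.ext
  filter_upwards [mul_ae φ (f - g), mul_ae φ f, mul_ae φ g, Lp.coeFn_sub f g,
    Lp.coeFn_sub (mul φ f) (mul φ g)] with x h1 h2 h3 h4 h5
  rw [h1, h5, Pi.sub_apply, h2, h3, h4, Pi.sub_apply, mul_sub]

lemma mul_zero' (φ : Linf) : mul φ (0 : L2) = 0 := by
  apply Lp.ext
  filter_upwards [mul_ae φ 0, Lp.coeFn_zero ℂ 2 μT] with x h1 h2
  rw [h1, h2]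
  simp

lemma mul_neg' (φ : Linf) (f : L2) : mul φ (-f) = -(mul φ f) := by
  have := mul_sub' φ 0 f
  rw [zero_sub, mul_zero', zero_sub] at this
  exact this

lemma mul_conj_cancel {θ : Linf} (hθ : ∀ᵐ x ∂μT, ‖(θ : Circ → ℂ) x‖ = 1) (f : L2) :
    mul θ (mul (conjInf θ) f) = f := by
  apply Lp.ext
  filter_upwards [mul_ae θ (mul (conjInf θ) f), mul_ae (conjInf θ) f, conjInf_ae θ, hθ]
    with x h1 h2 h3 hx
  rw [h1, h2, h3]
  have hone : (θ : Circ → ℂ) x * conj ((θ : Circ → ℂ) x) = 1 := by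
    rw [Complex.mul_conj, Complex.normSq_eq_norm_sq, hx]
    norm_num
  rw [← mul_assoc, hone, one_mul]

end Hardy

namespace Hardy

local notation "⟪" x ", " y "⟫" => @inner ℂ L2 _ x y

lemma inner_fourier_mul_zsym (k : ℤ) (f : L2) :
    ⟪(fourierLp 2 k : L2), mul zsym f⟫ = ⟪(fourierLp 2 (k - 1) : L2), f⟫ := by
  rw [MeasureTheory.L2.inner_def, MeasureTheory.L2.inner_def]
  apply integral_congr_ae
  filter_upwards [coeFn_fourierLp 2 k, coeFn_fourierLp 2 (k - 1), mul_ae zsym f,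
    coeFn_fourierLp ⊤ 1] with x h1 h2 h3 h4
  rw [RCLike.inner_apply, RCLike.inner_apply, h1, h2, h3]
  have h4' : (zsym : Circ → ℂ) x = fourier 1 x := h4
  rw [h4']
  have hk : fourier (k - 1) x * fourier 1 x = fourier k x := by
    rw [← fourier_add]
    norm_num
  rw [← hk, map_mul]
  have hone : conj (fourier 1 x) * fourier 1 x = 1 := by
    rw [← fourier_neg, ← fourier_add]
    norm_num
  calc fourier 1 x * f x * (conj (fourier (k - 1) x) * conj (fourier 1 x))
      = (conj (fourier (k - 1) x) * f x) * (conj (fourier 1 x) * fourier 1 x) := by ring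
    _ = f x * conj (fourier (k - 1) x) := by rw [hone, mul_one, mul_comm]

lemma J_mul_zsym (f : L2) : J (mul zsym f) = mul zbar (J f) := by
  apply Lp.ext
  refine (J_ae _).trans ?_
  refine (ae_comp_neg (mul_ae zsym f)).trans ?_
  refine Filter.EventuallyEq.trans ?_ (mul_ae zbar (J f)).symm
  filter_upwards [ae_comp_neg (coeFn_fourierLp ⊤ 1), J_ae f, coeFn_fourierLp ⊤ (-1)]
    with x hx hJ hz
  have hz' : (zbar : Circ → ℂ) x = fourier (-1) x := hz
  have hx' : (zsym : Circ → ℂ) (-x) = fourier 1 (-x) := hx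
  rw [hx', hJ, hz', fourier_neg_arg]

lemma inner_Jshift_H2 {f w : L2} (hf : f ∈ H2) (hw : w ∈ H2) :
    ⟪J (mul zsym f), w⟫ = 0 := by
  refine inner_H2_eq_zero (fun n => ?_) w hw
  have h1 : (fourierLp 2 (n : ℤ) : L2) = J (fourierLp 2 (-(n : ℤ))) := by
    rw [J_fourier, neg_neg]
  rw [h1, J_inner, ← inner_conj_symm, inner_fourier_mul_zsym,
    coeff_eq_zero_of_mem_H2 hf (by omega), map_zero]

lemma inner_shift_theta {θ : Linf} (hθ2 : ∀ᵐ x ∂μT, ‖(θ : Circ → ℂ) x‖ = 1)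
    (f w : L2) : ⟪mul zsym (mul θ f), mul θ w⟫ = ⟪mul zsym f, w⟫ := by
  rw [MeasureTheory.L2.inner_def, MeasureTheory.L2.inner_def]
  apply integral_congr_ae
  filter_upwards [mul_ae zsym (mul θ f), mul_ae θ f, mul_ae θ w, mul_ae zsym f, hθ2]
    with x h1 h2 h3 h4 hx
  rw [RCLike.inner_apply, RCLike.inner_apply, h1, h2, h3, h4]
  have hone : conj ((θ : Circ → ℂ) x) * (θ : Circ → ℂ) x = 1 := by
    rw [mul_comm, Complex.mul_conj, Complex.normSq_eq_norm_sq, hx]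
    norm_num
  calc ((θ : Circ → ℂ) x * w x) * conj ((zsym : Circ → ℂ) x * ((θ : Circ → ℂ) x * f x))
      = (conj ((zsym : Circ → ℂ) x) * conj (f x) * w x)
        * (conj ((θ : Circ → ℂ) x) * (θ : Circ → ℂ) x) := by
        simp only [map_mul]; ring
    _ = w x * conj ((zsym : Circ → ℂ) x * f x) := by
        rw [hone, mul_one, map_mul]; ring

lemma J_neg (f : L2) : J (-f) = -(J f) :=
  map_neg (Lp.compMeasurePreserving (fun x : Circ => -x) negMP) f

end Hardy

/-- for `R₁ = H_{θ̄} + ⟨·,u⟩v`, if `h ∈ Ker R₁` with `⟨h,u⟩ ≠ 0`, then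
`θ·Jv ∈ H²`, and indeed `θ·Jv ∈ K_{zθ} = H² ⊖ zθH²`. -/
theorem theta_mul_flip_mem_model_space_of_kerR_ne
    (θ : Linf) (hθ : IsInner θ) (hθc : NonConst θ)
    (u v : L2) (hu1 : ‖u‖ = 1) (hv1 : ‖v‖ = 1)
    (huH : u ∈ H2) (hvH : v ∈ H2) (hv0 : bshift v ≠ 0)
    (h : L2) (hker : h ∈ kerR (conjInf θ) (fun _ : Fin 1 => u) (fun _ : Fin 1 => v))
    (hhu : ip u h ≠ 0) :
    mul θ (J v) ∈ H2 ∧ ∀ f ∈ H2, ip (shift (mul θ f)) (mul θ (J v)) = 0 := by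
  obtain ⟨hH2, heq⟩ := hker
  set c : ℂ := ip u h with hc
  set g : L2 := mul (conjInf θ) h with hg
  have hsum : hank (conjInf θ) h + c • v = 0 := by
    simpa [Fin.sum_univ_one] using heq
  have hPJ : P (J g) = -(c • v) := by
    have h' : hank (conjInf θ) h = -(c • v) := by
      rwa [add_eq_zero_iff_eq_neg] at hsum
    exact h'
  set a : ℂ := (inner ℂ ((fourierLp 2 (0:ℤ) : L2)) g : ℂ) with ha
  have hJPJ : g - P g + a • (fourierLp 2 (0:ℤ) : L2) = -(c • J v) := by
    rw [← JPJ g, hPJ, J_neg, J_smul]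
  have hmul : mul θ (g - P g + a • (fourierLp 2 (0:ℤ) : L2)) = mul θ (-(c • J v)) := by
    rw [hJPJ]
  rw [mul_add', mul_sub', mul_smul', mul_neg', mul_smul'] at hmul
  have hgθ : mul θ g = h := mul_conj_cancel hθ.2 h
  rw [hgθ] at hmul
  have hkey : c • mul θ (J v)
      = mul θ (P g) - h - a • mul θ (fourierLp 2 (0:ℤ) : L2) := by
    apply neg_injective
    rw [← hmul]
    abel
  have hmem : c • mul θ (J v) ∈ H2 := by
    rw [hkey]
    exact Submodule.sub_mem _ (Submodule.sub_mem _ (hθ.1 _ (P_mem g)) hH2)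
      (Submodule.smul_mem _ _ (hθ.1 _ (fourier_mem_H2 le_rfl)))
  have hmemv : mul θ (J v) ∈ H2 := by
    have h2 := Submodule.smul_mem H2 c⁻¹ hmem
    rwa [smul_smul, inv_mul_cancel₀ hhu, one_smul] at h2
  refine ⟨hmemv, fun f hf => ?_⟩
  show (inner ℂ (mul zsym (mul θ f)) (mul θ (J v)) : ℂ) = 0
  rw [inner_shift_theta hθ.2 f (J v)]
  calc (inner ℂ (mul zsym f) (J v) : ℂ)
      = inner ℂ (J (J (mul zsym f))) (J v) := by rw [J_J]
    _ = inner ℂ (J (mul zsym f)) v := J_inner _ _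
    _ = 0 := inner_Jshift_H2 hf hvH
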